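/- In the generic mirabolic Hecke algebra ℛ_n over ℂ(q), the Jucys–Murphy element L_n = q^{1−n}·T_{n−1}⋯T_1·e·T_1⋯T_{n−1} commutes with e and with T_i for every 1 ≤ i ≤ n−2; consequently L_n commutes with every element of the subalgebra of ℛ_n generated by e, T_1, …, T_{n−2} (the image of ℛ_{n−1} under the natural inclusion). -/

import Mathlib

noncomputable section

/-- The relations of Solomon's presentation of the mirabolic Hecke algebra `R_n(K,q)`,
on generators `T_0, T_1, …, T_{n-1}` (indexed by `Fin n`). -/
inductive SolomonRel (K : Type) [Field K] (q : K) (n : ℕ) :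
    FreeAlgebra K (Fin n) → FreeAlgebra K (Fin n) → Prop
  | quad0 (i : Fin n) (hi : i.val = 0) :
      SolomonRel K q n (FreeAlgebra.ι K i * FreeAlgebra.ι K i)
        ((q - 2) • FreeAlgebra.ι K i + (q - 1) • (1 : FreeAlgebra K (Fin n)))
  | quad (i : Fin n) (hi : 1 ≤ i.val) :
      SolomonRel K q n (FreeAlgebra.ι K i * FreeAlgebra.ι K i)
        ((q - 1) • FreeAlgebra.ι K i + q • (1 : FreeAlgebra K (Fin n)))
  | braid (i j : Fin n) (hi : 1 ≤ i.val) (hij : i.val + 1 = j.val) :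
      SolomonRel K q n (FreeAlgebra.ι K i * FreeAlgebra.ι K j * FreeAlgebra.ι K i)
        (FreeAlgebra.ι K j * FreeAlgebra.ι K i * FreeAlgebra.ι K j)
  | rel4 (i j : Fin n) (hi : i.val = 0) (hj : j.val = 1) :
      SolomonRel K q n
        (FreeAlgebra.ι K i * FreeAlgebra.ι K j * FreeAlgebra.ι K i * FreeAlgebra.ι K j)
        ((q - 1) • (FreeAlgebra.ι K j * FreeAlgebra.ι K i * FreeAlgebra.ι K j +
            FreeAlgebra.ι K j * FreeAlgebra.ι K i) -
          FreeAlgebra.ι K i * FreeAlgebra.ι K j * FreeAlgebra.ι K i)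
  | rel5 (i j : Fin n) (hi : i.val = 0) (hj : j.val = 1) :
      SolomonRel K q n
        (FreeAlgebra.ι K j * FreeAlgebra.ι K i * FreeAlgebra.ι K j * FreeAlgebra.ι K i)
        ((q - 1) • (FreeAlgebra.ι K j * FreeAlgebra.ι K i * FreeAlgebra.ι K j +
            FreeAlgebra.ι K i * FreeAlgebra.ι K j) -
          FreeAlgebra.ι K i * FreeAlgebra.ι K j * FreeAlgebra.ι K i)
  | comm (i j : Fin n) (hij : i.val + 2 ≤ j.val ∨ j.val + 2 ≤ i.val) :
      SolomonRel K q n (FreeAlgebra.ι K i * FreeAlgebra.ι K j)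
        (FreeAlgebra.ι K j * FreeAlgebra.ι K i)

/-- The mirabolic Hecke algebra `R_n(K,q)`, presented by Solomon's relations. -/
abbrev MirabolicHecke (K : Type) [Field K] (q : K) (n : ℕ) : Type :=
  RingQuot (SolomonRel K q n)

/-- The generator `T_i` of the mirabolic Hecke algebra. -/
def MirabolicHecke.T {K : Type} [Field K] {q : K} {n : ℕ} (i : Fin n) :
    MirabolicHecke K q n :=
  RingQuot.mkAlgHom K (SolomonRel K q n) (FreeAlgebra.ι K i)


section JM

local notation "K" => RatFunc ℂ
local notation "q" => (RatFunc.X : RatFunc ℂ)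

variable (n : ℕ)

/-- The generic mirabolic Hecke algebra `ℛ_n` over `ℂ(q)`. -/
abbrev GenMirabolic (n : ℕ) : Type := MirabolicHecke K q n

/-- The generator `T_j` of `ℛ_n`, indexed by a natural number (junk value `0` if `j ≥ n`). -/
def Tnat (j : ℕ) : GenMirabolic n :=
  if h : j < n then MirabolicHecke.T ⟨j, h⟩ else 0

/-- The idempotent `e = q⁻¹(T_0 + 1)` of `ℛ_n`. -/
def eElt : GenMirabolic n := q⁻¹ • (Tnat n 0 + 1)

/-- The Jucys–Murphy element `L_i = q^{1−i}·T_{i−1}⋯T_1·e·T_1⋯T_{i−1}` of `ℛ_n`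
(for `1 ≤ i ≤ n`; in particular `L_1 = e`). -/
def JM (i : ℕ) : GenMirabolic n :=
  (q ^ (1 - (i : ℤ))) •
    (((List.range (i - 1)).reverse.map fun k => Tnat n (k + 1)).prod * eElt n *
      ((List.range (i - 1)).map fun k => Tnat n (k + 1)).prod)

end JM

/-!
Write `L_n = q^{1-n} · D e A` with `D = T_{n-1} ⋯ T_1` and `A = T_1 ⋯ T_{n-1}`. By the braid
relations, `A T_i = T_{i+1} A` and `T_i D = D T_{i+1}` for `1 ≤ i ≤ n-2`, while `e` commutes with
`T_{i+1}`; hence `D e A` commutes with `T_i`. For `e`, peel off one `T_m` on each side: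
`T_m ⋯ T_1 e T_1 ⋯ T_m = T_m (T_{m-1} ⋯ T_1 e T_1 ⋯ T_{m-1}) T_m`, and `e` commutes with `T_m`
for `m ≥ 2`, so everything reduces to `e` commuting with `T_1 e T_1`, which is a direct
consequence of the two quartic relations and the quadratic relation of `T_1`.
-/

section CoxeterProducts

variable {M : Type*} [Monoid M] (s : ℕ → M)

def descProd (m : ℕ) : M := ((List.range m).reverse.map s).prod

def ascProd (m : ℕ) : M := ((List.range m).map s).prod

@[simp]
lemma descProd_zero : descProd s 0 = 1 := rfl

@[simp]
lemma ascProd_zero : ascProd s 0 = 1 := rfl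

lemma descProd_succ (m : ℕ) : descProd s (m + 1) = s m * descProd s m := by
  simp [descProd, List.range_succ]

lemma ascProd_succ (m : ℕ) : ascProd s (m + 1) = ascProd s m * s m := by
  simp [ascProd, List.range_succ]

variable {s}

lemma commute_descProd (hcomm : ∀ i j, i + 2 ≤ j → Commute (s i) (s j)) {j m : ℕ}
    (h : m + 1 ≤ j) : Commute (s j) (descProd s m) :=
  Commute.list_prod_right _ _ <| by
    simp only [List.mem_map, List.mem_reverse, List.mem_range]
    rintro _ ⟨k, hk, rfl⟩
    exact (hcomm k j (by omega)).symm

lemma commute_ascProd (hcomm : ∀ i j, i + 2 ≤ j → Commute (s i) (s j)) {j m : ℕ}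
    (h : m + 1 ≤ j) : Commute (s j) (ascProd s m) :=
  Commute.list_prod_right _ _ <| by
    simp only [List.mem_map, List.mem_range]
    rintro _ ⟨k, hk, rfl⟩
    exact (hcomm k j (by omega)).symm

lemma commute_descProd_mul_self_mul_ascProd {x : M}
    (h₀ : Commute x (s 0 * x * s 0)) (hx : ∀ j, 1 ≤ j → Commute x (s j)) (m : ℕ) :
    Commute x (descProd s m * x * ascProd s m) := by
  cases m with
  | zero => simp
  | succ m =>
    induction m with
    | zero => simpa [descProd_succ, ascProd_succ] using h₀
    | succ m ih =>
      have hm := hx (m + 1) (by omega)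
      rw [descProd_succ, ascProd_succ]
      simpa only [mul_assoc] using (hm.mul_right ih).mul_right hm

variable (hcomm : ∀ i j, i + 2 ≤ j → Commute (s i) (s j))
  (hbraid : ∀ i, s i * s (i + 1) * s i = s (i + 1) * s i * s (i + 1))
include hcomm hbraid

lemma mul_descProd {i m : ℕ} (h : i + 2 ≤ m) :
    s i * descProd s m = descProd s m * s (i + 1) := by
  induction m with
  | zero => omega
  | succ m ih =>
    rcases Nat.lt_or_ge (i + 2) (m + 1) with hlt | hge
    · rw [descProd_succ, ← mul_assoc, (hcomm i m (by omega)).eq, mul_assoc, ih (by omega),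
        mul_assoc]
    · obtain rfl : m = i + 1 := by omega
      have hc := (commute_descProd hcomm (le_refl (i + 1))).eq
      rw [descProd_succ, descProd_succ]
      calc s i * (s (i + 1) * (s i * descProd s i))
          = s i * s (i + 1) * s i * descProd s i := by simp only [mul_assoc]
        _ = s (i + 1) * s i * (s (i + 1) * descProd s i) := by rw [hbraid]; simp only [mul_assoc]
        _ = s (i + 1) * (s i * descProd s i) * s (i + 1) := by rw [hc]; simp only [mul_assoc]

lemma ascProd_mul {i m : ℕ} (h : i + 2 ≤ m) :
    ascProd s m * s i = s (i + 1) * ascProd s m := by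
  induction m with
  | zero => omega
  | succ m ih =>
    rcases Nat.lt_or_ge (i + 2) (m + 1) with hlt | hge
    · rw [ascProd_succ, mul_assoc, ← (hcomm i m (by omega)).eq, ← mul_assoc, ih (by omega),
        mul_assoc]
    · obtain rfl : m = i + 1 := by omega
      have hc := (commute_ascProd hcomm (le_refl (i + 1))).eq
      rw [ascProd_succ, ascProd_succ]
      calc ascProd s i * s i * s (i + 1) * s i
          = ascProd s i * (s i * s (i + 1) * s i) := by simp only [mul_assoc]
        _ = (ascProd s i * s (i + 1)) * s i * s (i + 1) := by rw [hbraid]; simp only [mul_assoc]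
        _ = s (i + 1) * (ascProd s i * s i * s (i + 1)) := by rw [← hc]; simp only [mul_assoc]

lemma commute_descProd_mul_mul_ascProd {x : M} {i m : ℕ} (h : i + 2 ≤ m)
    (hx : Commute x (s (i + 1))) : Commute (descProd s m * x * ascProd s m) (s i) := by
  calc descProd s m * x * ascProd s m * s i
      = descProd s m * (x * s (i + 1)) * ascProd s m := by
        rw [mul_assoc, ascProd_mul hcomm hbraid h]; simp only [mul_assoc]
    _ = s i * (descProd s m * x * ascProd s m) := by
        rw [hx.eq, ← mul_assoc, ← mul_descProd hcomm hbraid h]; simp only [mul_assoc]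

end CoxeterProducts

section GenericMirabolic

local notation "K" => RatFunc ℂ
local notation "q" => (RatFunc.X : RatFunc ℂ)

variable (n : ℕ)

lemma Tnat_of_lt {j : ℕ} (h : j < n) :
    Tnat n j = RingQuot.mkAlgHom K (SolomonRel K q n) (FreeAlgebra.ι K ⟨j, h⟩) :=
  dif_pos h

lemma Tnat_of_not_lt {j : ℕ} (h : ¬j < n) : Tnat n j = 0 :=
  dif_neg h

lemma Tnat_commute {i j : ℕ} (h : i + 2 ≤ j) : Commute (Tnat n i) (Tnat n j) := by
  by_cases hj : j < n
  · rw [Tnat_of_lt n (by omega : i < n), Tnat_of_lt n hj, Commute, SemiconjBy, ← map_mul,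
      ← map_mul]
    exact RingQuot.mkAlgHom_rel K (SolomonRel.comm _ _ (Or.inl h))
  · rw [Tnat_of_not_lt n hj]
    exact Commute.zero_right _

lemma Tnat_braid {j : ℕ} (hj : 1 ≤ j) :
    Tnat n j * Tnat n (j + 1) * Tnat n j = Tnat n (j + 1) * Tnat n j * Tnat n (j + 1) := by
  by_cases h : j + 1 < n
  · rw [Tnat_of_lt n (by omega : j < n), Tnat_of_lt n h]
    simpa only [map_mul] using RingQuot.mkAlgHom_rel K (SolomonRel.braid _ _ hj rfl)
  · simp [Tnat_of_not_lt n h]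

lemma Tnat_one_mul_self (h : 1 < n) :
    Tnat n 1 * Tnat n 1 = (q - 1) • Tnat n 1 + q • (1 : GenMirabolic n) := by
  rw [Tnat_of_lt n h]
  simpa only [map_mul, map_add, map_smul, map_one] using
    RingQuot.mkAlgHom_rel K (s := SolomonRel K q n) (SolomonRel.quad ⟨1, h⟩ le_rfl)

lemma Tnat_zero_one_zero_one (h : 1 < n) :
    Tnat n 0 * Tnat n 1 * Tnat n 0 * Tnat n 1 =
      (q - 1) • (Tnat n 1 * Tnat n 0 * Tnat n 1 + Tnat n 1 * Tnat n 0) -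
        Tnat n 0 * Tnat n 1 * Tnat n 0 := by
  rw [Tnat_of_lt n (by omega : 0 < n), Tnat_of_lt n h]
  simpa only [map_mul, map_add, map_smul, map_sub] using
    RingQuot.mkAlgHom_rel K (s := SolomonRel K q n)
      (SolomonRel.rel4 ⟨0, by omega⟩ ⟨1, h⟩ rfl rfl)

lemma Tnat_one_zero_one_zero (h : 1 < n) :
    Tnat n 1 * Tnat n 0 * Tnat n 1 * Tnat n 0 =
      (q - 1) • (Tnat n 1 * Tnat n 0 * Tnat n 1 + Tnat n 0 * Tnat n 1) -
        Tnat n 0 * Tnat n 1 * Tnat n 0 := by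
  rw [Tnat_of_lt n (by omega : 0 < n), Tnat_of_lt n h]
  simpa only [map_mul, map_add, map_smul, map_sub] using
    RingQuot.mkAlgHom_rel K (s := SolomonRel K q n)
      (SolomonRel.rel5 ⟨0, by omega⟩ ⟨1, h⟩ rfl rfl)

lemma eElt_commute_Tnat {j : ℕ} (h : 2 ≤ j) : Commute (eElt n) (Tnat n j) :=
  ((Tnat_commute n h).add_left (Commute.one_left _)).smul_left _

lemma eElt_commute_Tnat_one_mul_eElt_mul_Tnat_one :
    Commute (eElt n) (Tnat n 1 * eElt n * Tnat n 1) := by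
  by_cases h : 1 < n
  · set a := Tnat n 0
    set b := Tnat n 1
    suffices Commute (a + 1) (b * (a + 1) * b) by
      simpa only [eElt, mul_smul_comm, smul_mul_assoc] using (this.smul_right _).smul_left _
    -- the two quartic relations and `b² = (q-1) b + q` contribute `±(q-1)(ab - ba)`
    have hquartic : a * b * a * b - b * a * b * a = (q - 1) • (b * a) - (q - 1) • (a * b) := by
      rw [Tnat_zero_one_zero_one n h, Tnat_one_zero_one_zero n h, smul_add, smul_add]
      abel
    have hquad : a * (b * b) - b * b * a = (q - 1) • (a * b) - (q - 1) • (b * a) := by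
      rw [Tnat_one_mul_self n h, mul_add, add_mul, mul_smul_comm, smul_mul_assoc,
        mul_smul_comm, smul_mul_assoc, mul_one, one_mul]
      abel
    rw [Commute, SemiconjBy, ← sub_eq_zero]
    calc (a + 1) * (b * (a + 1) * b) - b * (a + 1) * b * (a + 1)
        = (a * b * a * b - b * a * b * a) + (a * (b * b) - b * b * a) := by noncomm_ring
      _ = 0 := by rw [hquartic, hquad]; abel
  · simp [Tnat_of_not_lt n h]

lemma JM_self_eq : JM n n = (q ^ (1 - (n : ℤ))) •
    (descProd (fun k => Tnat n (k + 1)) (n - 1) * eElt n *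
      ascProd (fun k => Tnat n (k + 1)) (n - 1)) := rfl

end GenericMirabolic

section Stmt14

local notation "K" => RatFunc ℂ

/-- In `ℛ_n`, the Jucys–Murphy element `L_n` commutes with `e` and with
`T_i` for `1 ≤ i ≤ n−2`; consequently it commutes with every element of the subalgebra
generated by `e, T_1, …, T_{n−2}` (the image of `ℛ_{n−1}`). -/
theorem jucysMurphy_last_commutes (n : ℕ) :
    Commute (JM n n) (eElt n) ∧
    (∀ i : ℕ, 1 ≤ i → i ≤ n - 2 → Commute (JM n n) (Tnat n i)) ∧
    (∀ x ∈ Algebra.adjoin K ({eElt n} ∪ {y | ∃ i : ℕ, 1 ≤ i ∧ i ≤ n - 2 ∧ y = Tnat n i}),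
      Commute (JM n n) x) := by
  have hcomm : ∀ i j, i + 2 ≤ j → Commute (Tnat n (i + 1)) (Tnat n (j + 1)) :=
    fun i j h => Tnat_commute n (by omega)
  have hbraid (i : ℕ) := Tnat_braid n (j := i + 1) (by omega)
  have he : Commute (JM n n) (eElt n) := by
    rw [JM_self_eq]
    refine (commute_descProd_mul_self_mul_ascProd ?_ ?_ _).symm.smul_left _
    · exact eElt_commute_Tnat_one_mul_eElt_mul_Tnat_one n
    · exact fun j hj => eElt_commute_Tnat n (by omega)
  have hT : ∀ i, 1 ≤ i → i ≤ n - 2 → Commute (JM n n) (Tnat n i) := by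
    rintro (_ | i) hi hin
    · omega
    rw [JM_self_eq]
    exact (commute_descProd_mul_mul_ascProd hcomm hbraid (by omega)
      (eElt_commute_Tnat n (by omega))).smul_left _
  refine ⟨he, hT, fun x hx => ?_⟩
  have hle : Algebra.adjoin K ({eElt n} ∪ {y | ∃ i : ℕ, 1 ≤ i ∧ i ≤ n - 2 ∧ y = Tnat n i}) ≤
      Subalgebra.centralizer K {JM n n} := by
    refine Algebra.adjoin_le ?_
    rintro y (rfl | ⟨i, hi, hin, rfl⟩) <;>
      rw [SetLike.mem_coe, Subalgebra.mem_centralizer_iff]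
    · simpa using he.eq
    · simpa using (hT i hi hin).eq
  exact (Subalgebra.mem_centralizer_iff K).1 (hle hx) _ rfl

end Stmt14
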